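/- arXiv:2407.19561 — 2 statements merged into one kernel-verified Lean document; each statement's English description precedes it below -/
import Mathlib

section
/- Let d ≥ 1 and let F : ℂ → ℂ be a degree-d semi-polynomial such that F(z) is a non-negative real number for every z with |z| = 1, and F is not identically zero on the unit circle. Let z be distributed according to the uniform (Haar) probability measure on the unit circle {z ∈ ℂ : |z| = 1}. Then for every ε > 0, Pr[ F(z) ≤ ε · E[F(z)] ] ≤ (8d/π + 1) · ε^{1/(2d)}. -/
open MeasureTheory
open scoped ComplexOrder Real

/-- `F : ℂ → ℂ` is a degree-`d` semi-polynomial in one complex variable: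
a polynomial of total degree at most `d` in `z` and its complex conjugate. -/
def IsSemiPoly1 (d : ℕ) (F : ℂ → ℂ) : Prop :=
  ∃ p : MvPolynomial (Fin 2) ℂ, p.totalDegree ≤ d ∧
    ∀ z : ℂ, F z = MvPolynomial.eval ![z, (starRingEnd ℂ) z] p

/-- The uniform probability measure on `[0, 2π)`, parameterizing the unit circle
via `θ ↦ exp(iθ)`. -/
noncomputable def circleUniform : Measure ℝ :=
  (ENNReal.ofReal (2 * π))⁻¹ • volume.restrict (Set.Ico 0 (2 * π))

/-! On the unit circle `z ^ d * F z` agrees with a polynomial `G = c ∏ (X - a)` of degree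
`k ≤ 2d`, so there `F = ‖G‖ = ‖c‖ ∏ ‖z - a‖`. Each factor is at most `2 max 1 ‖a‖`, hence
`E[F] ≤ 2 ^ k M(G)` with `M(G) = ‖c‖ ∏ max 1 ‖a‖` the Mahler measure. If `F z ≤ ε E[F]` and
`ε = r ^ (2d) ≤ r ^ k`, comparing the products factorwise yields a root with
`‖z - a‖ ≤ 2r max 1 ‖a‖`, which confines `arg z` to an arc of length `2 arcsin (2r) ≤ 2πr` around
`arg a`. A union bound over the at most `2d` roots gives probability at most
`2dr ≤ (8d/π + 1) r`. -/

open Polynomial Real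

local instance : Fact (0 < 2 * π) := ⟨two_pi_pos⟩

theorem circleUniform_preimage_coe {B : Set (AddCircle (2 * π))} (hB : MeasurableSet B) :
    circleUniform ((↑) ⁻¹' B) = (ENNReal.ofReal (2 * π))⁻¹ * volume B := by
  have h := (AddCircle.measurePreserving_mk (2 * π) 0).measure_preimage hB.nullMeasurableSet
  rw [zero_add] at h
  rw [circleUniform, Measure.smul_apply, smul_eq_mul,
    Measure.restrict_congr_set Ico_ae_eq_Ioc, h]

instance : IsProbabilityMeasure circleUniform := by
  constructor
  rw [← Set.preimage_univ, circleUniform_preimage_coe MeasurableSet.univ, AddCircle.measure_univ]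
  exact ENNReal.inv_mul_cancel (by simp [pi_pos]) ENNReal.ofReal_ne_top

theorem arcsin_le_pi_div_two_mul {s : ℝ} (hs0 : 0 ≤ s) (hs1 : s ≤ 1) : arcsin s ≤ π / 2 * s := by
  have := mul_le_sin (arcsin_nonneg.2 hs0) (arcsin_le_pi_div_two s)
  rw [sin_arcsin (by linarith) hs1] at this
  rw [div_mul_eq_mul_div, div_le_iff₀ pi_pos] at this
  linarith

theorem norm_coe_le_of_cos_le_cos {x β : ℝ} (hβ0 : 0 ≤ β) (hβπ : β ≤ π) (h : cos β ≤ cos x) :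
    ‖(x : AddCircle (2 * π))‖ ≤ β := by
  have hy := AddCircle.norm_le_half_period (2 * π) (x := (x : AddCircle (2 * π))) two_pi_pos.ne'
  rw [abs_of_pos two_pi_pos, mul_div_cancel_left₀ _ two_ne_zero] at hy
  rw [AddCircle.norm_eq] at hy ⊢
  by_contra! hlt
  have := strictAntiOn_cos ⟨hβ0, hβπ⟩ ⟨abs_nonneg _, hy⟩ hlt
  rw [cos_abs, cos_sub_int_mul_two_pi] at this
  linarith

theorem norm_exp_mul_I_sub_sq (θ : ℝ) (a : ℂ) :
    ‖Complex.exp (θ * Complex.I) - a‖ ^ 2 = 1 + ‖a‖ ^ 2 - 2 * ‖a‖ * cos (θ - Complex.arg a) := by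
  have hre : (Complex.exp (θ * Complex.I) * (starRingEnd ℂ) a).re =
      ‖a‖ * cos (θ - Complex.arg a) := by
    rw [cos_sub, mul_add, ← mul_assoc, ← mul_assoc, mul_comm ‖a‖ (cos θ), mul_comm ‖a‖ (sin θ),
      mul_assoc, mul_assoc, Complex.norm_mul_cos_arg, Complex.norm_mul_sin_arg]
    simp [Complex.mul_re, Complex.exp_ofReal_mul_I_re, Complex.exp_ofReal_mul_I_im]
  rw [← Complex.normSq_eq_norm_sq, Complex.normSq_sub, hre, Complex.normSq_eq_norm_sq,
    Complex.normSq_eq_norm_sq, Complex.norm_exp_ofReal_mul_I]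
  ring

theorem cos_arcsin_le_cos_sub_arg {θ s : ℝ} {a : ℂ} (hs : s < 1)
    (h : ‖Complex.exp (θ * Complex.I) - a‖ ≤ s * max 1 ‖a‖) :
    cos (arcsin s) ≤ cos (θ - Complex.arg a) := by
  have hsq := pow_le_pow_left₀ (norm_nonneg _) h 2
  rw [norm_exp_mul_I_sub_sq] at hsq
  have hs0 : 0 ≤ s := nonneg_of_mul_nonneg_left ((norm_nonneg _).trans h) (by positivity)
  have hq : √(1 - s ^ 2) ^ 2 = 1 - s ^ 2 := sq_sqrt (by nlinarith)
  have ha := norm_nonneg a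
  rw [cos_arcsin]
  rcases le_total ‖a‖ 1 with ha1 | ha1
  · rw [max_eq_left ha1] at hsq
    have : 0 < ‖a‖ := by
      by_contra! h0
      rw [le_antisymm h0 ha] at hsq
      nlinarith
    nlinarith [sq_nonneg (‖a‖ - √(1 - s ^ 2))]
  · rw [max_eq_right ha1] at hsq
    nlinarith [sq_nonneg (1 - ‖a‖ * √(1 - s ^ 2))]

theorem circleUniform_norm_exp_sub_le (a : ℂ) {s : ℝ} (hs0 : 0 ≤ s) (hs1 : s < 1) :
    circleUniform {θ : ℝ | ‖Complex.exp (θ * Complex.I) - a‖ ≤ s * max 1 ‖a‖} ≤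
      ENNReal.ofReal (s / 2) := by
  have hsub : {θ : ℝ | ‖Complex.exp (θ * Complex.I) - a‖ ≤ s * max 1 ‖a‖} ⊆
      (↑) ⁻¹' Metric.closedBall (Complex.arg a : AddCircle (2 * π)) (arcsin s) := by
    intro θ hθ
    rw [Set.mem_preimage, Metric.mem_closedBall, dist_eq_norm, ← AddCircle.coe_sub]
    exact norm_coe_le_of_cos_le_cos (arcsin_nonneg.2 hs0)
      ((arcsin_le_pi_div_two s).trans (by linarith [pi_pos])) (cos_arcsin_le_cos_sub_arg hs1 hθ)
  calc _ ≤ _ := measure_mono hsub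
    _ = (ENNReal.ofReal (2 * π))⁻¹ * ENNReal.ofReal (min (2 * π) (2 * arcsin s)) := by
      rw [circleUniform_preimage_coe Metric.isClosed_closedBall.measurableSet,
        AddCircle.volume_closedBall]
    _ ≤ (ENNReal.ofReal (2 * π))⁻¹ * ENNReal.ofReal (π * s) := by
      gcongr
      linarith [min_le_right (2 * π) (2 * arcsin s), arcsin_le_pi_div_two_mul hs0 hs1.le]
    _ = ENNReal.ofReal (s / 2) := by
      rw [← ENNReal.ofReal_inv_of_pos two_pi_pos, ← ENNReal.ofReal_mul (by positivity)]
      congr 1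
      field_simp

theorem Multiset.exists_le_of_prod_map_le {ι R : Type*} [CommSemiring R] [LinearOrder R]
    [IsStrictOrderedRing R] {s : Multiset ι} (hs : s ≠ 0) {f g : ι → R}
    (hg : ∀ i ∈ s, 0 < g i) (h : (s.map f).prod ≤ (s.map g).prod) : ∃ i ∈ s, f i ≤ g i := by
  by_contra! hlt
  exact (Multiset.prod_map_lt_prod_map hs g f hg hlt).not_ge h

theorem Multiset.prod_map_const_mul {ι R : Type*} [CommMonoid R] (s : Multiset ι) (c : R)
    (f : ι → R) : (s.map fun i => c * f i).prod = c ^ card s * (s.map f).prod := by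
  rw [Multiset.prod_map_mul, Multiset.map_const', Multiset.prod_replicate]

namespace Polynomial

theorem norm_eval_eq_mul_prod_roots (G : ℂ[X]) (z : ℂ) :
    ‖G.eval z‖ = ‖G.leadingCoeff‖ * (G.roots.map fun a => ‖z - a‖).prod := by
  rw [(IsAlgClosed.splits G).eval_eq_prod_roots, norm_mul]
  exact congrArg _ <|
    (map_multiset_prod (normHom : ℂ →*₀ ℝ) _).trans (by rw [Multiset.map_map]; rfl)

theorem norm_eval_le_two_pow_mul_mahlerMeasure (G : ℂ[X]) {z : ℂ} (hz : ‖z‖ = 1) :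
    ‖G.eval z‖ ≤ 2 ^ G.natDegree * G.mahlerMeasure := by
  rw [norm_eval_eq_mul_prod_roots, mahlerMeasure_eq_leadingCoeff_mul_prod_roots,
    (IsAlgClosed.splits G).natDegree_eq_card_roots, mul_left_comm,
    ← Multiset.prod_map_const_mul]
  gcongr
  refine Multiset.prod_map_le_prod_map₀ _ _ (fun _ _ => norm_nonneg _) fun a _ => ?_
  calc ‖z - a‖ ≤ ‖z‖ + ‖a‖ := norm_sub_le z a
    _ ≤ 2 * max 1 ‖a‖ := by rw [hz]; linarith [le_max_left 1 ‖a‖, le_max_right 1 ‖a‖]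

theorem exists_mem_roots_norm_sub_le {G : ℂ[X]} (hG : G ≠ 0) {z : ℂ} {ε r : ℝ} (hε : ε < 1)
    (hr : 0 < r) (hεr : ε ≤ r ^ G.natDegree)
    (h : ‖G.eval z‖ ≤ ε * (2 ^ G.natDegree * G.mahlerMeasure)) :
    ∃ a ∈ G.roots, ‖z - a‖ ≤ 2 * r * max 1 ‖a‖ := by
  have hc : 0 < ‖G.leadingCoeff‖ := norm_pos_iff.2 (leadingCoeff_ne_zero.2 hG)
  have hP := one_le_prod_max_one_norm_roots G
  rw [norm_eval_eq_mul_prod_roots, mahlerMeasure_eq_leadingCoeff_mul_prod_roots,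
    (IsAlgClosed.splits G).natDegree_eq_card_roots] at h
  rw [(IsAlgClosed.splits G).natDegree_eq_card_roots] at hεr
  have hroots : G.roots ≠ 0 := by
    intro h0
    simp only [h0, Multiset.map_zero, Multiset.prod_zero, Multiset.card_zero, pow_zero] at h
    nlinarith
  refine Multiset.exists_le_of_prod_map_le hroots (fun a _ => by positivity) ?_
  rw [Multiset.prod_map_const_mul, mul_pow, mul_comm (2 ^ _)]
  calc _ ≤ ε * 2 ^ G.roots.card * (G.roots.map fun a => max 1 ‖a‖).prod :=
        le_of_mul_le_mul_left (by linarith) hc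
    _ ≤ _ := by gcongr

theorem integral_norm_eval_exp_le (G : ℂ[X]) :
    ∫ θ, ‖G.eval (Complex.exp (θ * Complex.I))‖ ∂circleUniform ≤
      2 ^ G.natDegree * G.mahlerMeasure := by
  have := norm_integral_le_of_norm_le_const (μ := circleUniform) <| .of_forall fun θ =>
    (norm_norm (G.eval (Complex.exp (θ * Complex.I)))).trans_le
      (G.norm_eval_le_two_pow_mul_mahlerMeasure (Complex.norm_exp_ofReal_mul_I θ))
  rw [probReal_univ, mul_one, Real.norm_eq_abs] at this
  exact (le_abs_self _).trans this

theorem circleUniform_norm_eval_le {G : ℂ[X]} (hG : G ≠ 0) {ε r : ℝ} (hε : ε < 1) (hr0 : 0 < r)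
    (hr1 : r < 1 / 2) (hεr : ε ≤ r ^ G.natDegree) :
    circleUniform {θ : ℝ | ‖G.eval (Complex.exp (θ * Complex.I))‖ ≤
        ε * (2 ^ G.natDegree * G.mahlerMeasure)} ≤ ENNReal.ofReal (G.natDegree * r) := by
  calc _ ≤ circleUniform (⋃ a ∈ G.roots.toFinset,
        {θ : ℝ | ‖Complex.exp (θ * Complex.I) - a‖ ≤ 2 * r * max 1 ‖a‖}) :=
        measure_mono fun θ hθ => by
          obtain ⟨a, ha, hle⟩ := exists_mem_roots_norm_sub_le hG hε hr0 hεr hθ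
          exact Set.mem_biUnion (Multiset.mem_toFinset.2 ha) hle
    _ ≤ ∑ a ∈ G.roots.toFinset,
        circleUniform {θ : ℝ | ‖Complex.exp (θ * Complex.I) - a‖ ≤ 2 * r * max 1 ‖a‖} :=
        measure_biUnion_finset_le _ _
    _ ≤ ∑ _a ∈ G.roots.toFinset, ENNReal.ofReal r := Finset.sum_le_sum fun a _ => by
        simpa using circleUniform_norm_exp_sub_le a (s := 2 * r) (by positivity) (by linarith)
    _ ≤ ENNReal.ofReal (G.natDegree * r) := by
        rw [Finset.sum_const, nsmul_eq_mul, ← ENNReal.ofReal_natCast,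
          ← ENNReal.ofReal_mul (Nat.cast_nonneg _)]
        gcongr
        exact (Multiset.toFinset_card_le _).trans (IsAlgClosed.splits G).natDegree_eq_card_roots.ge

end Polynomial

theorem IsSemiPoly1.exists_polynomial_eval_eq {d : ℕ} {F : ℂ → ℂ} (hF : IsSemiPoly1 d F) :
    ∃ G : ℂ[X], G.natDegree ≤ 2 * d ∧ ∀ z : ℂ, ‖z‖ = 1 → G.eval z = z ^ d * F z := by
  obtain ⟨p, hp, hpF⟩ := hF
  have hdeg : ∀ m ∈ p.support, m 0 + m 1 ≤ d := fun m hm => by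
    simpa [Finsupp.sum_fintype, Fin.sum_univ_two] using (MvPolynomial.le_totalDegree hm).trans hp
  refine ⟨∑ m ∈ p.support, C (p.coeff m) * X ^ (d + m 0 - m 1), ?_, fun z hz => ?_⟩
  · refine natDegree_sum_le_of_forall_le _ _ fun m hm => (natDegree_C_mul_le _ _).trans ?_
    rw [natDegree_X_pow]
    have := hdeg m hm
    omega
  · have hz0 : z ≠ 0 := norm_ne_zero_iff.1 (hz ▸ one_ne_zero)
    rw [hpF, MvPolynomial.eval_eq', Finset.mul_sum, eval_finsetSum]
    refine Finset.sum_congr rfl fun m hm => ?_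
    have := hdeg m hm
    simp [Fin.prod_univ_two, ← Complex.inv_eq_conj hz, pow_sub₀ _ hz0 (by omega : m 1 ≤ d + m 0)]
    ring

theorem anticoncentration_circle_general (d : ℕ) (F : ℂ → ℂ)
    (hF : IsSemiPoly1 d F)
    (hpos : ∀ z : ℂ, ‖z‖ = 1 → 0 ≤ F z)
    (hne : ∃ z : ℂ, ‖z‖ = 1 ∧ F z ≠ 0) :
    ∀ ε : ℝ, 0 < ε →
      circleUniform {θ : ℝ | (F (Complex.exp (θ * Complex.I))).re ≤
          ε * ∫ θ', (F (Complex.exp (θ' * Complex.I))).re ∂circleUniform}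
        ≤ ENNReal.ofReal ((8 * d / π + 1) * ε ^ (1 / (2 * d) : ℝ)) := by
  intro ε hε
  obtain ⟨G, hGdeg, hGF⟩ := hF.exists_polynomial_eval_eq
  have hG : G ≠ 0 := by
    rintro rfl
    obtain ⟨z, hz, hFz⟩ := hne
    simpa [hFz, norm_ne_zero_iff.1 (hz ▸ one_ne_zero : ‖z‖ ≠ 0)] using hGF z hz
  have hFG (θ : ℝ) :
      (F (Complex.exp (θ * Complex.I))).re = ‖G.eval (Complex.exp (θ * Complex.I))‖ := by
    have hz := Complex.norm_exp_ofReal_mul_I θ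
    rw [hGF _ hz, norm_mul, norm_pow, hz, one_pow, one_mul, Complex.re_eq_norm.2 (hpos _ hz)]
  simp only [hFG]
  set r := ε ^ (1 / (2 * d) : ℝ)
  have h8 : (2 * d : ℝ) ≤ 8 * d / π := by
    rw [le_div_iff₀ pi_pos]; nlinarith [pi_le_four, (Nat.cast_nonneg d : (0 : ℝ) ≤ d)]
  rcases le_or_gt 1 ((8 * d / π + 1) * r) with hbig | hsmall
  · exact prob_le_one.trans (ENNReal.one_le_ofReal.2 hbig)
  -- `1 / (2 * 0) = 0`, so for `d = 0` the right-hand side is `1`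
  have hd : d ≠ 0 := by rintro rfl; simp [r] at hsmall
  have hr0 : 0 < r := by positivity
  have hr : r < 1 / 2 := by
    have : (1 : ℝ) ≤ d := by exact_mod_cast Nat.one_le_iff_ne_zero.2 hd
    nlinarith
  have hεr : ε = r ^ (2 * d) := by
    rw [← Real.rpow_natCast, ← Real.rpow_mul hε.le, Nat.cast_mul, Nat.cast_two,
      one_div_mul_cancel (by positivity), Real.rpow_one]
  calc _ ≤ circleUniform {θ : ℝ | ‖G.eval (Complex.exp (θ * Complex.I))‖ ≤
          ε * (2 ^ G.natDegree * G.mahlerMeasure)} :=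
        measure_mono fun θ hθ =>
          hθ.trans (mul_le_mul_of_nonneg_left (integral_norm_eval_exp_le G) hε.le)
    _ ≤ ENNReal.ofReal (G.natDegree * r) :=
        circleUniform_norm_eval_le hG (hεr ▸ pow_lt_one₀ hr0.le (by linarith) (by omega)) hr0 hr
          (hεr ▸ pow_le_pow_of_le_one hr0.le (by linarith) hGdeg)
    _ ≤ _ := by
        gcongr
        have : (G.natDegree : ℝ) ≤ 2 * d := by exact_mod_cast hGdeg
        linarith

/-- Anti-concentration on the unit circle: if `F` is a degree-`d` semi-polynomial
that is real and non-negative on the unit circle and not identically zero there, then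
for `z` Haar-uniform on the circle, `Pr[F(z) ≤ ε·E[F(z)]] ≤ (8d/π + 1)·ε^{1/(2d)}`. -/
theorem anticoncentration_circle (d : ℕ) (hd : 1 ≤ d) (F : ℂ → ℂ)
    (hF : IsSemiPoly1 d F)
    (hpos : ∀ z : ℂ, ‖z‖ = 1 → 0 ≤ F z)
    (hne : ∃ z : ℂ, ‖z‖ = 1 ∧ F z ≠ 0) :
    ∀ ε : ℝ, 0 < ε →
      circleUniform {θ : ℝ | (F (Complex.exp (θ * Complex.I))).re ≤
          ε * ∫ θ', (F (Complex.exp (θ' * Complex.I))).re ∂circleUniform}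
        ≤ ENNReal.ofReal ((8 * d / π + 1) * ε ^ (1 / (2 * d) : ℝ)) :=
  anticoncentration_circle_general d F hF hpos hne
end

section
/- Let n ≥ 2 and d ≥ 1, and let F : ℂⁿ → ℂ be a degree-d semi-polynomial. Then there exists a degree-d semi-polynomial P : ℂ → ℂ such that for every u_1 ∈ ℂ with |u_1| ≤ 1, P(u_1) = E_{u'}[ F(u_1, √(1 − |u_1|²) · u') ], where u' is a Haar-random unit vector in ℂ^{n−1}. Equivalently: if u = (u_1, …, u_n) is a Haar-random unit vector in ℂⁿ, then the conditional expectation of F(u) given u_1 is a degree-d semi-polynomial in u_1. -/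
open MeasureTheory

/-- `F : ℂ^ι → ℂ` is a degree-`d` semi-polynomial: a polynomial of total degree
at most `d` in the variables `z i` and their complex conjugates. -/
def IsSemiPoly {ι : Type*} (d : ℕ) (F : (ι → ℂ) → ℂ) : Prop :=
  ∃ p : MvPolynomial (ι ⊕ ι) ℂ, p.totalDegree ≤ d ∧
    ∀ z : ι → ℂ, F z = MvPolynomial.eval (Sum.elim z (fun i => (starRingEnd ℂ) (z i))) p

/-- `μ` is the Haar (unitarily invariant) probability measure on the unit sphere
of `ℂⁿ`, viewed as a measure on `ℂⁿ` supported on the sphere. -/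
def IsHaarSphere (n : ℕ) (μ : Measure (Fin n → ℂ)) : Prop :=
  IsProbabilityMeasure μ ∧
    μ {u : Fin n → ℂ | ∑ i, ‖u i‖ ^ 2 = 1} = 1 ∧
    ∀ U : Matrix.unitaryGroup (Fin n) ℂ,
      μ.map (fun u => (U : Matrix (Fin n) (Fin n) ℂ).mulVec u) = μ

/-! After expanding `F` into monomials `z^e z̄^f`, the substituted monomial
`F(u₁, s u')` with `s = √(1 - |u₁|²)` factors as `u₁^a ū₁^b s^(|e'| + |f'|) · u'^e' ū'^f'`.
The Haar measure is invariant under the phases `u' ↦ c u'`, `|c| = 1`, which multiply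
`u'^e' ū'^f'` by `c^(|e'| - |f'|)`; hence its integral vanishes unless `|e'| = |f'|`, and
then `s^(2|e'|) = (1 - u₁ ū₁)^|e'|` is a semi-polynomial of the right degree. -/

open ComplexConjugate

theorem integral_eq_zero_of_comp_eq_mul {α : Type*} [MeasurableSpace α] {μ : Measure α}
    {T : α → α} (hT : Measurable T) (hμ : μ.map T = μ) {g : α → ℂ}
    (hg : AEStronglyMeasurable g μ) {w : ℂ} (hw : w ≠ 1) (hgT : ∀ x, g (T x) = w * g x) :
    ∫ x, g x ∂μ = 0 := by
  have hfix : ∫ x, g x ∂μ = w * ∫ x, g x ∂μ := calc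
    ∫ x, g x ∂μ = ∫ x, g x ∂(μ.map T) := by rw [hμ]
    _ = ∫ x, g (T x) ∂μ := integral_map hT.aemeasurable (hμ.symm ▸ hg)
    _ = w * ∫ x, g x ∂μ := by simp only [hgT, integral_const_mul]
  have : (1 - w) * ∫ x, g x ∂μ = 0 := by linear_combination hfix
  exact (mul_eq_zero.1 this).resolve_left (sub_ne_zero.2 hw.symm)

section SemiMonomial

variable {ι : Type*} [Fintype ι]

def semiMonomial (e f : ι → ℕ) (z : ι → ℂ) : ℂ :=
  (∏ j, z j ^ e j) * ∏ j, conj (z j) ^ f j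

@[fun_prop]
theorem continuous_semiMonomial (e f : ι → ℕ) : Continuous (semiMonomial e f) := by
  unfold semiMonomial
  fun_prop

theorem semiMonomial_smul (e f : ι → ℕ) (c : ℂ) (z : ι → ℂ) :
    semiMonomial e f (c • z) = c ^ (∑ j, e j) * conj c ^ (∑ j, f j) * semiMonomial e f z := by
  simp only [semiMonomial, Pi.smul_apply, smul_eq_mul, map_mul, mul_pow,
    Finset.prod_mul_distrib, Finset.prod_pow_eq_pow_sum]
  ring

theorem semiMonomial_cons {n : ℕ} (e f : Fin (n + 1) → ℕ) (x : ℂ) (z : Fin n → ℂ) :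
    semiMonomial e f (Fin.cons x z) =
      x ^ e 0 * conj x ^ f 0 * semiMonomial (Fin.tail e) (Fin.tail f) z := by
  simp only [semiMonomial, Fin.prod_univ_succ, Fin.cons_zero, Fin.cons_succ, Fin.tail]
  ring

theorem MvPolynomial.eval_sumElim_conj (p : MvPolynomial (ι ⊕ ι) ℂ) (z : ι → ℂ) :
    eval (Sum.elim z fun i => conj (z i)) p =
      ∑ m ∈ p.support, coeff m p * semiMonomial (m ∘ Sum.inl) (m ∘ Sum.inr) z := by
  simp only [eval_eq', Fintype.prod_sum_type, Sum.elim_inl, Sum.elim_inr, semiMonomial,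
    Function.comp_apply]

/-- The phase `exp (iπ / (|e| - |f|))` multiplies the monomial by `-1`. -/
theorem integral_semiMonomial_eq_zero {μ : Measure (ι → ℂ)}
    (hμ : ∀ c : Circle, μ.map (fun z => (c : ℂ) • z) = μ) {e f : ι → ℕ}
    (hef : ∑ j, e j ≠ ∑ j, f j) : ∫ z, semiMonomial e f z ∂μ = 0 := by
  set k : ℤ := (∑ j, e j : ℕ) - (∑ j, f j : ℕ)
  have hk : (k : ℝ) ≠ 0 := by exact_mod_cast sub_ne_zero.2 (by exact_mod_cast hef)
  set c := Circle.exp (Real.pi / k)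
  refine integral_eq_zero_of_comp_eq_mul (measurable_const_smul _) (hμ c)
    (continuous_semiMonomial e f).aestronglyMeasurable (w := (c : ℂ) ^ k) ?_ fun z => ?_
  · rw [← Circle.coe_zpow, ← Circle.exp_intCast_mul, mul_div_cancel₀ _ hk, Ne,
      Circle.coe_eq_one]
    exact Circle.exp_pi_ne_one
  · rw [semiMonomial_smul, ← Circle.coe_inv_eq_conj, Circle.coe_inv, inv_pow,
      zpow_sub₀ (Circle.coe_ne_zero c), zpow_natCast, zpow_natCast, div_eq_mul_inv]

end SemiMonomial

theorem isCompact_setOf_sum_norm_sq_eq_one (n : ℕ) :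
    IsCompact {u : Fin n → ℂ | ∑ i, ‖u i‖ ^ 2 = 1} := by
  refine (isCompact_closedBall (0 : Fin n → ℂ) 1).of_isClosed_subset
    (isClosed_eq (by fun_prop) continuous_const) fun u hu => ?_
  rw [mem_closedBall_zero_iff, pi_norm_le_iff_of_nonneg zero_le_one]
  intro j
  have hj : ‖u j‖ ^ 2 ≤ 1 :=
    hu ▸ Finset.single_le_sum (f := fun i => ‖u i‖ ^ 2) (fun i _ => by positivity)
      (Finset.mem_univ j)
  exact (pow_le_one_iff_of_nonneg (norm_nonneg _) two_ne_zero).mp hj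

namespace IsHaarSphere

variable {n : ℕ} {ν : Measure (Fin n → ℂ)}

theorem ae_sum_norm_sq_eq_one (hν : IsHaarSphere n ν) :
    ∀ᵐ u ∂ν, ∑ i, ‖u i‖ ^ 2 = 1 := by
  have := hν.1
  have hmeas : MeasurableSet {u : Fin n → ℂ | ∑ i, ‖u i‖ ^ 2 = 1} :=
    (isCompact_setOf_sum_norm_sq_eq_one n).isClosed.measurableSet
  rw [ae_iff, ← Set.compl_ofPred, measure_compl hmeas (measure_ne_top ν _), hν.2.1,
    measure_univ, tsub_self]

theorem integrable_of_continuous {E : Type*} [NormedAddCommGroup E] (hν : IsHaarSphere n ν)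
    {g : (Fin n → ℂ) → E} (hg : Continuous g) : Integrable g ν := by
  have := hν.1
  rw [← Measure.restrict_eq_self_of_ae_mem hν.ae_sum_norm_sq_eq_one]
  exact hg.continuousOn.integrableOn_compact (isCompact_setOf_sum_norm_sq_eq_one n)

theorem map_smul_circle (hν : IsHaarSphere n ν) (c : Circle) :
    ν.map (fun u => (c : ℂ) • u) = ν := by
  have hU : (c : ℂ) • (1 : Matrix (Fin n) (Fin n) ℂ) ∈ Matrix.unitaryGroup (Fin n) ℂ := by
    rw [Matrix.mem_unitaryGroup_iff, star_smul, star_one, smul_mul_smul_comm, mul_one,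
      Complex.star_def, Complex.mul_conj, Circle.normSq_coe, Complex.ofReal_one, one_smul]
  simpa only [Matrix.smul_mulVec, Matrix.one_mulVec] using hν.2.2 ⟨_, hU⟩

end IsHaarSphere

def IsSemiPolyOn (d : ℕ) (s : Set ℂ) (G : ℂ → ℂ) : Prop :=
  ∃ P : ℂ → ℂ, IsSemiPoly1 d P ∧ Set.EqOn P G s

namespace IsSemiPolyOn

variable {d : ℕ} {s : Set ℂ}

theorem zero : IsSemiPolyOn d s fun _ => 0 :=
  ⟨0, ⟨0, by simp, fun _ => by simp⟩, Set.eqOn_refl _ _⟩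

theorem add {G H : ℂ → ℂ} (hG : IsSemiPolyOn d s G) (hH : IsSemiPolyOn d s H) :
    IsSemiPolyOn d s (G + H) := by
  obtain ⟨P, ⟨p, hpd, hpP⟩, hPG⟩ := hG
  obtain ⟨Q, ⟨q, hqd, hqQ⟩, hQH⟩ := hH
  refine ⟨P + Q, ⟨p + q, ?_, fun z => by simp [hpP, hqQ]⟩, fun z hz => ?_⟩
  · exact (MvPolynomial.totalDegree_add p q).trans (max_le hpd hqd)
  · simp [hPG hz, hQH hz]

theorem const_mul {G : ℂ → ℂ} (hG : IsSemiPolyOn d s G) (a : ℂ) :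
    IsSemiPolyOn d s (fun z => a * G z) := by
  obtain ⟨P, ⟨p, hpd, hpP⟩, hPG⟩ := hG
  refine ⟨fun z => a * P z, ⟨a • p, ?_, fun z => by simp [hpP]⟩, fun z hz => ?_⟩
  · exact (MvPolynomial.totalDegree_smul_le a p).trans hpd
  · simp [hPG hz]

theorem mono {G : ℂ → ℂ} (hG : IsSemiPolyOn d s G) {d' : ℕ} (hd : d ≤ d') :
    IsSemiPolyOn d' s G := by
  obtain ⟨P, ⟨p, hpd, hpP⟩, hPG⟩ := hG
  exact ⟨P, ⟨p, hpd.trans hd, hpP⟩, hPG⟩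

theorem sum {κ : Type*} (t : Finset κ) {G : κ → ℂ → ℂ} (hG : ∀ i ∈ t, IsSemiPolyOn d s (G i)) :
    IsSemiPolyOn d s (fun z => ∑ i ∈ t, G i z) := by
  classical
  induction t using Finset.induction_on with
  | empty => simpa using zero
  | insert i t hi ih =>
    simp_rw [Finset.sum_insert hi]
    exact (hG i (t.mem_insert_self i)).add (ih fun j hj => hG j (Finset.mem_insert_of_mem hj))

end IsSemiPolyOn

theorem isSemiPolyOn_pow_mul_conj_pow_mul_one_sub_mul_conj_pow (s : Set ℂ) (a b k : ℕ) :
    IsSemiPolyOn (a + b + 2 * k) s fun z => z ^ a * conj z ^ b * (1 - z * conj z) ^ k := by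
  open MvPolynomial in
  refine ⟨_, ⟨X 0 ^ a * X 1 ^ b * (1 - X 0 * X 1) ^ k, ?_, fun z => by simp⟩, Set.eqOn_refl _ _⟩
  have hquad : (1 - X 0 * X 1 : MvPolynomial (Fin 2) ℂ).totalDegree ≤ 2 :=
    (totalDegree_sub _ _).trans <| max_le (by simp) <|
      (totalDegree_mul _ _).trans (by rw [totalDegree_X, totalDegree_X])
  refine (totalDegree_mul _ _).trans (add_le_add ?_ ?_)
  · exact (totalDegree_mul _ _).trans (by rw [totalDegree_X_pow, totalDegree_X_pow])
  · exact (totalDegree_pow _ _).trans (by rw [mul_comm 2]; exact Nat.mul_le_mul_left k hquad)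

theorem ofReal_sqrt_one_sub_norm_sq_sq {z : ℂ} (hz : ‖z‖ ≤ 1) :
    (Real.sqrt (1 - ‖z‖ ^ 2) : ℂ) ^ 2 = 1 - z * conj z := by
  have h : (0 : ℝ) ≤ 1 - ‖z‖ ^ 2 := by nlinarith [norm_nonneg z]
  rw [← Complex.ofReal_pow, Real.sq_sqrt h, Complex.mul_conj, Complex.normSq_eq_norm_sq,
    Complex.ofReal_sub, Complex.ofReal_one]

theorem IsHaarSphere.isSemiPolyOn_integral_semiMonomial_cons {n : ℕ}
    {ν : Measure (Fin n → ℂ)} (hν : IsHaarSphere n ν) (e f : Fin (n + 1) → ℕ) :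
    IsSemiPolyOn (∑ i, e i + ∑ i, f i) {z | ‖z‖ ≤ 1} fun u₁ =>
      ∫ u', semiMonomial e f (Fin.cons u₁ fun j => (Real.sqrt (1 - ‖u₁‖ ^ 2) : ℂ) * u' j) ∂ν := by
  set A := ∑ j, Fin.tail e j
  set B := ∑ j, Fin.tail f j
  set I := ∫ u', semiMonomial (Fin.tail e) (Fin.tail f) u' ∂ν
  have hsplit : ∀ (u₁ : ℂ) (s : ℝ),
      ∫ u', semiMonomial e f (Fin.cons u₁ fun j => (s : ℂ) * u' j) ∂ν =
        u₁ ^ e 0 * conj u₁ ^ f 0 * (s : ℂ) ^ (A + B) * I := by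
    intro u₁ s
    simp_rw [← smul_eq_mul, ← Pi.smul_def, semiMonomial_cons, semiMonomial_smul,
      Complex.conj_ofReal, smul_eq_mul, ← pow_add, integral_const_mul]
    exact (mul_assoc _ _ _).symm
  by_cases hAB : A = B
  · have hdeg : ∑ i, e i + ∑ i, f i = e 0 + f 0 + 2 * A := by
      rw [Fin.sum_univ_succ, Fin.sum_univ_succ]
      change _ + A + (_ + B) = _
      omega
    obtain ⟨P, hP, hPG⟩ :=
      (isSemiPolyOn_pow_mul_conj_pow_mul_one_sub_mul_conj_pow {z : ℂ | ‖z‖ ≤ 1}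
        (e 0) (f 0) A).const_mul I
    refine ⟨P, hdeg ▸ hP, fun u₁ hu₁ => (hPG hu₁).trans ?_⟩
    dsimp only
    rw [hsplit, ← hAB, ← two_mul, pow_mul, ofReal_sqrt_one_sub_norm_sq_sq hu₁]
    ring
  · have hI : I = 0 := integral_semiMonomial_eq_zero hν.map_smul_circle hAB
    simp_rw [hsplit, hI, mul_zero]
    exact IsSemiPolyOn.zero

theorem conditional_expectation_semipoly_general (n d : ℕ)
    (F : (Fin (n + 1) → ℂ) → ℂ) (hF : IsSemiPoly d F)
    (ν : Measure (Fin n → ℂ)) (hν : IsHaarSphere n ν) :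
    ∃ P : ℂ → ℂ, IsSemiPoly1 d P ∧
      ∀ u₁ : ℂ, ‖u₁‖ ≤ 1 →
        P u₁ = ∫ u', F (Fin.cons u₁
            (fun j => (Real.sqrt (1 - ‖u₁‖ ^ 2) : ℂ) * u' j)) ∂ν := by
  obtain ⟨p, hpd, hpF⟩ := hF
  have hdeg : ∀ m ∈ p.support, ∑ i, m (.inl i) + ∑ i, m (.inr i) ≤ d := fun m hm => by
    rw [← Fintype.sum_sum_type, ← Finsupp.sum_fintype m (fun _ k => k) fun _ => rfl]
    exact (MvPolynomial.le_totalDegree hm).trans hpd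
  have hexpand : (fun u₁ => ∫ u', F (Fin.cons u₁
      (fun j => (Real.sqrt (1 - ‖u₁‖ ^ 2) : ℂ) * u' j)) ∂ν) = fun u₁ =>
        ∑ m ∈ p.support, MvPolynomial.coeff m p * ∫ u', semiMonomial (m ∘ Sum.inl) (m ∘ Sum.inr)
          (Fin.cons u₁ fun j => (Real.sqrt (1 - ‖u₁‖ ^ 2) : ℂ) * u' j) ∂ν := by
    funext u₁
    simp_rw [hpF, MvPolynomial.eval_sumElim_conj]
    rw [integral_finsetSum _ fun m _ => (hν.integrable_of_continuous (by fun_prop)).const_mul _]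
    simp_rw [integral_const_mul]
  obtain ⟨P, hP, hPG⟩ : IsSemiPolyOn d {z | ‖z‖ ≤ 1} _ := hexpand ▸ IsSemiPolyOn.sum _ fun m hm =>
    ((hν.isSemiPolyOn_integral_semiMonomial_cons _ _).mono (hdeg m hm)).const_mul _
  exact ⟨P, hP, fun u₁ hu₁ => hPG hu₁⟩

/-- If `F : ℂ^{n+1} → ℂ` is a degree-`d` semi-polynomial and `u = (u₁, …, u_{n+1})` is a
Haar-random unit vector in `ℂ^{n+1}`, then the conditional expectation of `F(u)` given `u₁`,
namely `u₁ ↦ E_{u'}[F(u₁, √(1−|u₁|²)·u')]` for `u'` Haar-random on the unit sphere of `ℂⁿ`,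
is a degree-`d` semi-polynomial in `u₁`. -/
theorem conditional_expectation_semipoly (n d : ℕ) (hn : 1 ≤ n) (hd : 1 ≤ d)
    (F : (Fin (n + 1) → ℂ) → ℂ) (hF : IsSemiPoly d F)
    (ν : Measure (Fin n → ℂ)) (hν : IsHaarSphere n ν) :
    ∃ P : ℂ → ℂ, IsSemiPoly1 d P ∧
      ∀ u₁ : ℂ, ‖u₁‖ ≤ 1 →
        P u₁ = ∫ u', F (Fin.cons u₁
            (fun j => (Real.sqrt (1 - ‖u₁‖ ^ 2) : ℂ) * u' j)) ∂ν :=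
  conditional_expectation_semipoly_general n d F hF ν hν
end
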